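/- Let I be a subset of vertices of Y and let Y_I be the graph obtained by contracting I to a single vertex V_I. If O¹ and O² are acyclic orientations of Y agreeing on I (with I equal to the vw-interval of both, admitting a common linear extension v_1⋯v_k of I), and the induced orientations O¹_{Y_I} and O²_{Y_I} are κ-equivalent in Y_I, then O¹ and O² are κ-equivalent in Y. -/

import Mathlib

/-!
An orientation `s` of `Y_I` lifts to `Y`: orient the edges inside `I` as `O¹` does and every
other edge as its image under the contraction map. If `I` is convex for an orientation `O`
that agrees with `O¹` on `I`, which holds for the `vw`-interval, the lift of `O_{Y_I}` is `O`.
A click at `u` in `Y_I` lifts to reversing all edges leaving the fibre of `u`, a set that no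
edge enters; such a reversal is a sequence of clicks at the vertices of the set, taken in a
linear extension of the orientation. So a click-sequence from `O¹_{Y_I}` to `O²_{Y_I}`
lifts to one from `O¹` to `O²`.
-/

namespace AcycPaper

variable {V : Type*}

/-- `r` is an orientation of the graph `Y`: exactly one direction per edge. -/
def IsOrientation (Y : SimpleGraph V) (r : V → V → Prop) : Prop :=
  (∀ i j, Y.Adj i j ↔ (r i j ∨ r j i)) ∧ ∀ i j, r i j → ¬ r j i

/-- A relation is acyclic if it has no directed cycles. -/
def IsAcyclicRel (r : V → V → Prop) : Prop := ∀ v, ¬ Relation.TransGen r v v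

/-- The set of acyclic orientations of `Y`. -/
def Acyc (Y : SimpleGraph V) : Set (V → V → Prop) :=
  {r | IsOrientation Y r ∧ IsAcyclicRel r}

/-- `v` is a source: no edge points into `v`. -/
def IsSource (r : V → V → Prop) (v : V) : Prop := ∀ j, ¬ r j v

open Classical in
/-- Click (source-to-sink move) at `v`: reverse all edges incident to `v`. -/
def click (r : V → V → Prop) (v : V) : V → V → Prop :=
  fun i j => if v = i ∨ v = j then r j i else r i j

/-- One click step between acyclic orientations. -/
def ClickStep (Y : SimpleGraph V) (r r' : V → V → Prop) : Prop :=
  r ∈ Acyc Y ∧ ∃ v, IsSource r v ∧ r' = click r v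

/-- κ-equivalence: the equivalence relation generated by clicks. -/
def KEquiv (Y : SimpleGraph V) : (V → V → Prop) → (V → V → Prop) → Prop :=
  Relation.EqvGen (ClickStep Y)

/-- The set of κ-equivalence classes of acyclic orientations. -/
def KQuot (Y : SimpleGraph V) := Quot (fun a b : Acyc Y => ClickStep Y a.1 b.1)

/-- κ(Y): number of κ-equivalence classes. -/
noncomputable def kappa (Y : SimpleGraph V) : ℕ := Nat.card (KQuot Y)

/-- α(Y): number of acyclic orientations. -/
noncomputable def alpha (Y : SimpleGraph V) : ℕ := Nat.card (Acyc Y)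

open Classical in
/-- The class of a vertex after contracting the set I to the representative v₀:
v₀ represents all of I, every other vertex represents itself. -/
def cls (I : Set V) (v₀ : V) (a : V) : Set V := if a = v₀ then I ∪ {v₀} else {a}

/-- The graph Y_I obtained from Y by contracting the vertex set I to the single
vertex v₀ (the other vertices of I become isolated). -/
def contractSetG (Y : SimpleGraph V) (I : Set V) (v₀ : V) : SimpleGraph V where
  Adj a b := a ∉ I \ {v₀} ∧ b ∉ I \ {v₀} ∧ a ≠ b ∧
    ∃ a' ∈ cls I v₀ a, ∃ b' ∈ cls I v₀ b, Y.Adj a' b'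
  symm := by
    constructor
    rintro a b ⟨h1, h2, h3, a', ha, b', hb, hadj⟩
    exact ⟨h2, h1, h3.symm, b', hb, a', ha, hadj.symm⟩
  loopless := by constructor; rintro a ⟨_, _, h, _⟩; exact h rfl

/-- The orientation induced on the contracted graph Y_I by an orientation r. -/
def contractSetRel (r : V → V → Prop) (I : Set V) (v₀ : V) : V → V → Prop :=
  fun a b => a ∉ I \ {v₀} ∧ b ∉ I \ {v₀} ∧ a ≠ b ∧
    ∃ a' ∈ cls I v₀ a, ∃ b' ∈ cls I v₀ b, r a' b'

open Relation

section Clicks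

variable {V : Type*} {Y : SimpleGraph V} {r : V → V → Prop}

open Classical in
def clickSet (r : V → V → Prop) (J : Set V) : V → V → Prop :=
  fun a b => if (a ∈ J ↔ b ∈ J) then r a b else r b a

lemma IsOrientation.adj (h : IsOrientation Y r) {a b : V} (hab : r a b) : Y.Adj a b :=
  (h.1 a b).2 (Or.inl hab)

lemma IsOrientation.irrefl (h : IsOrientation Y r) (a : V) : ¬ r a a :=
  fun haa => h.2 a a haa haa

lemma click_eq_clickSet (u : V) : click r u = clickSet r {u} := by
  funext a b
  by_cases ha : a = u <;> by_cases hb : b = u <;> simp [click, clickSet, ha, hb, eq_comm (a := u)]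

lemma clickSet_empty : clickSet r ∅ = r := by
  funext a b
  simp [clickSet]

lemma clickSet_click {J : Set V} {u : V} (hu : u ∈ J) :
    clickSet (click r u) (J \ {u}) = clickSet r J := by
  funext a b
  by_cases ha : a ∈ J <;> by_cases hb : b ∈ J <;> by_cases hau : a = u <;>
    by_cases hbu : b = u <;> simp_all [click, clickSet, eq_comm]

lemma isOrientation_click (h : IsOrientation Y r) (u : V) : IsOrientation Y (click r u) := by
  refine ⟨fun a b => ?_, fun a b => ?_⟩
  · have := h.1 a b
    unfold click
    split_ifs <;> tauto
  · have := h.2 a b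
    have := h.2 b a
    unfold click
    split_ifs <;> tauto

lemma click_rel_of_isSource {u : V} (hu : IsSource r u) {a b : V} (hab : click r u a b) :
    a ≠ u ∧ (b = u ∨ r a b) := by
  unfold click at hab
  split_ifs at hab with h
  · rcases h with rfl | rfl
    · exact absurd hab (hu b)
    · exact ⟨fun hau => hu a (hau ▸ hab), Or.inl rfl⟩
  · exact ⟨fun hau => h (Or.inl hau.symm), Or.inr hab⟩

lemma transGen_click_of_isSource {u : V} (hu : IsSource r u) {a b : V}
    (h : TransGen (click r u) a b) : a ≠ u ∧ (b = u ∨ TransGen r a b) := by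
  induction h with
  | single hab => exact (click_rel_of_isSource hu hab).imp_right (Or.imp_right .single)
  | tail _ hbc ih =>
    obtain ⟨hbu, rfl | hbc⟩ := click_rel_of_isSource hu hbc
    · exact ⟨ih.1, Or.inl rfl⟩
    · exact ⟨ih.1, Or.inr <| (ih.2.resolve_left hbu).tail hbc⟩

-- A source becomes a sink, so a directed cycle after the click avoids `u` and was already there.
lemma click_mem_acyc (hr : r ∈ Acyc Y) {u : V} (hu : IsSource r u) : click r u ∈ Acyc Y := by
  refine ⟨isOrientation_click hr.1 u, fun a ha => ?_⟩
  obtain ⟨hau, rfl | ha⟩ := transGen_click_of_isSource hu ha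
  exacts [hau rfl, hr.2 a ha]

lemma IsAcyclicRel.wellFounded [Finite V] (hr : IsAcyclicRel r) : WellFounded r :=
  haveI : IsTrans V (TransGen r) := ⟨fun _ _ _ => TransGen.trans⟩
  haveI : Std.Irrefl (TransGen r) := ⟨hr⟩
  (Finite.wellFounded_of_trans_of_irrefl (TransGen r)).mono fun _ _ => TransGen.single

theorem kEquiv_clickSet [Finite V] (hr : r ∈ Acyc Y) {J : Set V}
    (hJ : ∀ a b, r a b → b ∈ J → a ∈ J) : KEquiv Y r (clickSet r J) := by
  induction hn : J.ncard generalizing r J with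
  | zero =>
    rw [(Set.ncard_eq_zero J.toFinite).1 hn, clickSet_empty]
    exact EqvGen.refl _
  | succ n ih =>
    obtain ⟨u, hu, hmin⟩ :=
      hr.2.wellFounded.has_min J (Set.nonempty_of_ncard_ne_zero (by omega))
    have hsrc : IsSource r u := fun a hau => hmin a (hJ a u hau hu) hau
    have hJ' : ∀ a b, click r u a b → b ∈ J \ {u} → a ∈ J \ {u} := by
      rintro a b hab ⟨hb, hbu⟩
      obtain ⟨hau, rfl | hab⟩ := click_rel_of_isSource hsrc hab
      exacts [absurd rfl hbu, ⟨hJ a b hab hb, hau⟩]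
    have hrest := ih (click_mem_acyc hr hsrc) hJ'
      (by rw [Set.ncard_sdiff_singleton_of_mem hu]; omega)
    rw [clickSet_click hu] at hrest
    exact EqvGen.trans _ _ _ (EqvGen.rel _ _ ⟨hr, u, hsrc, rfl⟩) hrest

end Clicks

section Contraction

variable {V : Type*} {Y : SimpleGraph V} {I : Set V} {v : V}

open Classical in
noncomputable def contractVertex (I : Set V) (v a : V) : V := if a ∈ I then v else a

lemma contractVertex_of_mem {a : V} (h : a ∈ I) : contractVertex I v a = v := if_pos h

lemma contractVertex_eq_contractVertex_iff (hv : v ∈ I) {a b : V} :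
    contractVertex I v a = contractVertex I v b ↔ a = b ∨ a ∈ I ∧ b ∈ I := by
  by_cases ha : a ∈ I <;> by_cases hb : b ∈ I <;>
    simp [contractVertex, ha, hb] <;> constructor <;> rintro rfl <;> contradiction

lemma contractVertex_notMem_sdiff (a : V) : contractVertex I v a ∉ I \ {v} := by
  by_cases ha : a ∈ I <;> simp [contractVertex, ha]

lemma cls_eq_preimage_contractVertex {c : V} (hc : c ∉ I \ {v}) :
    cls I v c = contractVertex I v ⁻¹' {c} := by
  ext a
  simp only [cls, contractVertex, Set.mem_preimage, Set.mem_singleton_iff]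
  split_ifs <;> grind

lemma contractSetRel_iff {r : V → V → Prop} {x y : V} :
    contractSetRel r I v x y ↔
      x ≠ y ∧ Relation.Map r (contractVertex I v) (contractVertex I v) x y := by
  constructor
  · rintro ⟨hx, hy, hxy, a, ha, b, hb, hab⟩
    rw [cls_eq_preimage_contractVertex hx] at ha
    rw [cls_eq_preimage_contractVertex hy] at hb
    exact ⟨hxy, a, b, hab, ha, hb⟩
  · rintro ⟨hxy, a, b, hab, rfl, rfl⟩
    refine ⟨contractVertex_notMem_sdiff a, contractVertex_notMem_sdiff b, hxy,
      a, ?_, b, ?_, hab⟩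
    · rw [cls_eq_preimage_contractVertex (contractVertex_notMem_sdiff a)]; rfl
    · rw [cls_eq_preimage_contractVertex (contractVertex_notMem_sdiff b)]; rfl

lemma contractSetRel_empty {r : V → V → Prop} (hr : ∀ a, ¬ r a a) :
    contractSetRel r ∅ v = r := by
  have hid : contractVertex (∅ : Set V) v = id := funext fun _ => if_neg id
  funext x y
  rw [contractSetRel_iff, hid, map_id_id, eq_iff_iff]
  exact ⟨And.right, fun h => ⟨fun hxy => hr x (hxy ▸ h), h⟩⟩

lemma contractSetG_empty (Y : SimpleGraph V) (v : V) : contractSetG Y ∅ v = Y :=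
  SimpleGraph.ext (contractSetRel_empty (r := Y.Adj) Y.loopless.irrefl)

lemma contractVertex_ne (hv : v ∈ I) {a b : V} (hab : a ≠ b) (hI : ¬(a ∈ I ∧ b ∈ I)) :
    contractVertex I v a ≠ contractVertex I v b := by
  rw [Ne, contractVertex_eq_contractVertex_iff hv]
  tauto

lemma contractSetG_adj_contractVertex (hv : v ∈ I) {a b : V} (hab : Y.Adj a b)
    (hI : ¬(a ∈ I ∧ b ∈ I)) :
    (contractSetG Y I v).Adj (contractVertex I v a) (contractVertex I v b) :=
  contractSetRel_iff.2 ⟨contractVertex_ne hv hab.ne hI, a, b, hab, rfl, rfl⟩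

end Contraction

section Lift

variable {V : Type*} {Y : SimpleGraph V} {I : Set V} {v : V} {rin s : V → V → Prop}

open Classical in
noncomputable def liftRel (Y : SimpleGraph V) (I : Set V) (v : V) (rin s : V → V → Prop) :
    V → V → Prop := fun a b =>
  Y.Adj a b ∧
    if a ∈ I ∧ b ∈ I then rin a b else s (contractVertex I v a) (contractVertex I v b)

lemma liftRel_isOrientation (hv : v ∈ I) (hrin : IsOrientation Y rin)
    (hs : IsOrientation (contractSetG Y I v) s) : IsOrientation Y (liftRel Y I v rin s) := by
  refine ⟨fun a b => ⟨fun hab => ?_, ?_⟩, fun a b ⟨_, hab⟩ ⟨_, hba⟩ => ?_⟩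
  · unfold liftRel
    by_cases h : a ∈ I ∧ b ∈ I
    · rw [if_pos h, if_pos h.symm]
      have := (hrin.1 a b).1 hab
      tauto
    · rw [if_neg h, if_neg (mt And.symm h)]
      have := (hs.1 _ _).1 (contractSetG_adj_contractVertex hv hab h)
      tauto
  · rintro (⟨hab, -⟩ | ⟨hba, -⟩)
    exacts [hab, hba.symm]
  · by_cases h : a ∈ I ∧ b ∈ I
    · rw [if_pos h] at hab
      rw [if_pos h.symm] at hba
      exact hrin.2 a b hab hba
    · rw [if_neg h] at hab
      rw [if_neg (mt And.symm h)] at hba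
      exact hs.2 _ _ hab hba

lemma transGen_liftRel {a b : V} (h : TransGen (liftRel Y I v rin s) a b) :
    (contractVertex I v a = contractVertex I v b ∧ TransGen rin a b) ∨
      TransGen s (contractVertex I v a) (contractVertex I v b) := by
  have step : ∀ {a b}, liftRel Y I v rin s a b →
      (contractVertex I v a = contractVertex I v b ∧ rin a b) ∨
        s (contractVertex I v a) (contractVertex I v b) := by
    rintro a b ⟨-, hab⟩
    split_ifs at hab with h
    · exact Or.inl ⟨by rw [contractVertex_of_mem h.1, contractVertex_of_mem h.2], hab⟩
    · exact Or.inr hab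
  induction h with
  | single hab => exact (step hab).imp (And.imp_right .single) .single
  | tail _ hbc ih =>
    rcases ih with ⟨hab, hab'⟩ | hab <;> rcases step hbc with ⟨hbc, hbc'⟩ | hbc
    · exact Or.inl ⟨hab.trans hbc, hab'.tail hbc'⟩
    · exact Or.inr (hab ▸ .single hbc)
    · exact Or.inr (hbc ▸ hab)
    · exact Or.inr (hab.tail hbc)

lemma liftRel_isAcyclicRel (hrin : IsAcyclicRel rin) (hs : IsAcyclicRel s) :
    IsAcyclicRel (liftRel Y I v rin s) := fun a ha =>
  (transGen_liftRel ha).elim (fun h => hrin a h.2) (hs _)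

lemma liftRel_mem_acyc (hv : v ∈ I) (hrin : rin ∈ Acyc Y)
    (hs : s ∈ Acyc (contractSetG Y I v)) :
    liftRel Y I v rin s ∈ Acyc Y :=
  ⟨liftRel_isOrientation hv hrin.1 hs.1, liftRel_isAcyclicRel hrin.2 hs.2⟩

lemma liftRel_clickSet (K : Set V) :
    liftRel Y I v rin (clickSet s K) =
      clickSet (liftRel Y I v rin s) (contractVertex I v ⁻¹' K) := by
  funext a b
  simp only [liftRel, clickSet, Set.mem_preimage]
  by_cases h : a ∈ I ∧ b ∈ I
  · have hab : contractVertex I v a = contractVertex I v b := by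
      rw [contractVertex_of_mem h.1, contractVertex_of_mem h.2]
    simp [h, hab]
  · split_ifs <;> simp_all [Y.adj_comm]

lemma liftRel_source_preimage {u : V} (hu : IsSource s u) {a b : V}
    (hab : liftRel Y I v rin s a b) (hb : b ∈ contractVertex I v ⁻¹' {u}) :
    a ∈ contractVertex I v ⁻¹' {u} := by
  obtain ⟨-, hab⟩ := hab
  rw [Set.mem_preimage, Set.mem_singleton_iff] at hb ⊢
  split_ifs at hab with h
  · rw [contractVertex_of_mem h.1, ← hb, contractVertex_of_mem h.2]
  · exact absurd (hb ▸ hab) (hu _)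

-- The fibre of `u` is `I` if `u = v`, empty if `u` is another (isolated) vertex of `I`,
-- and `{u}` otherwise.
theorem kEquiv_liftRel_click [Finite V] (hv : v ∈ I) (hrin : rin ∈ Acyc Y)
    (hs : s ∈ Acyc (contractSetG Y I v)) {u : V} (hu : IsSource s u) :
    KEquiv Y (liftRel Y I v rin s) (liftRel Y I v rin (click s u)) := by
  rw [click_eq_clickSet, liftRel_clickSet]
  exact kEquiv_clickSet (liftRel_mem_acyc hv hrin hs) fun a b => liftRel_source_preimage hu

theorem KEquiv.liftRel [Finite V] (hv : v ∈ I) (hrin : rin ∈ Acyc Y) {s t : V → V → Prop}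
    (h : KEquiv (contractSetG Y I v) s t) :
    KEquiv Y (liftRel Y I v rin s) (liftRel Y I v rin t) := by
  induction h with
  | rel s t hst =>
    obtain ⟨hs, u, hu, rfl⟩ := hst
    exact kEquiv_liftRel_click hv hrin hs hu
  | refl => exact EqvGen.refl _
  | symm _ _ _ ih => exact EqvGen.symm _ _ ih
  | trans _ _ _ _ _ ih₁ ih₂ => exact EqvGen.trans _ _ _ ih₁ ih₂

end Lift

section Retract

variable {V : Type*} {Y : SimpleGraph V} {I : Set V} {v : V} {r rin : V → V → Prop}

def IsRelConvex (r : V → V → Prop) (I : Set V) : Prop :=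
  ∀ x ∈ I, ∀ y ∈ I, ∀ c, r x c → r c y → c ∈ I

lemma isRelConvex_interval (v w : V) :
    IsRelConvex r {a | ReflTransGen r v a ∧ ReflTransGen r a w} :=
  fun _ hx _ hy _ hxc hcy => ⟨hx.1.tail hxc, hy.2.head hcy⟩

-- Convexity of `I` forces each edge leaving `I` to point the way the contracted edge does.
theorem liftRel_contractSetRel (hr : IsOrientation Y r) (hv : v ∈ I)
    (hI : IsRelConvex r I)
    (hrin : ∀ a ∈ I, ∀ b ∈ I, rin a b ↔ r a b) :
    liftRel Y I v rin (contractSetRel r I v) = r := by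
  funext a b
  rw [eq_iff_iff]
  unfold liftRel
  split_ifs with h
  · exact ⟨fun hab => (hrin a h.1 b h.2).1 hab.2,
      fun hab => ⟨hr.adj hab, (hrin a h.1 b h.2).2 hab⟩⟩
  constructor
  · rintro ⟨hab, hab'⟩
    obtain ⟨-, a', b', hr', ha', hb'⟩ := contractSetRel_iff.1 hab'
    refine ((hr.1 a b).1 hab).resolve_right fun hba => ?_
    rw [contractVertex_eq_contractVertex_iff hv] at ha' hb'
    rcases ha' with rfl | ⟨ha', ha⟩ <;> rcases hb' with rfl | ⟨hb', hb⟩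
    · exact hr.2 _ _ hr' hba
    · exact h ⟨hI b hb _ hb' _ hba hr', hb⟩
    · exact h ⟨ha, hI _ ha' _ ha _ hr' hba⟩
    · exact h ⟨ha, hb⟩
  · intro hab
    have hne := contractVertex_ne hv (hr.adj hab).ne h
    exact ⟨hr.adj hab, contractSetRel_iff.2 ⟨hne, a, b, hab, rfl, rfl⟩⟩

end Retract

theorem kappa_equiv_of_contraction_general {V : Type*} [Fintype V] (Y : SimpleGraph V)
    (v w : V) (r₁ r₂ : V → V → Prop)
    (h₁ : r₁ ∈ Acyc Y) (h₂ : r₂ ∈ Acyc Y) (I : Set V)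
    (hI₁ : I = {a | Relation.ReflTransGen r₁ v a ∧ Relation.ReflTransGen r₁ a w})
    (hI₂ : I = {a | Relation.ReflTransGen r₂ v a ∧ Relation.ReflTransGen r₂ a w})
    (hagree : ∀ a ∈ I, ∀ b ∈ I, r₁ a b ↔ r₂ a b)
    (hk : KEquiv (contractSetG Y I v)
      (contractSetRel r₁ I v) (contractSetRel r₂ I v)) :
    KEquiv Y r₁ r₂ := by
  rcases I.eq_empty_or_nonempty with rfl | ⟨a, ha⟩
  · rwa [contractSetG_empty, contractSetRel_empty h₁.1.irrefl,
      contractSetRel_empty h₂.1.irrefl] at hk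
  have hv : v ∈ I := by
    rw [hI₁] at ha ⊢
    exact ⟨.refl, ha.1.trans ha.2⟩
  have hconv₁ : IsRelConvex r₁ I := hI₁ ▸ isRelConvex_interval v w
  have hconv₂ : IsRelConvex r₂ I := hI₂ ▸ isRelConvex_interval v w
  have hlift := hk.liftRel hv h₁
  rwa [liftRel_contractSetRel h₁.1 hv hconv₁ fun _ _ _ _ => Iff.rfl,
    liftRel_contractSetRel h₂.1 hv hconv₂ hagree] at hlift

/-- let I be the vw-interval of both acyclic orientations r₁, r₂
of Y (which agree on I). If the induced orientations of the contracted graph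
Y_I (I contracted to the vertex v) are κ-equivalent in Y_I, then r₁ and r₂ are
κ-equivalent in Y. -/
theorem kappa_equiv_of_contraction {V : Type*} [Fintype V] (Y : SimpleGraph V)
    (v w : V) (he : Y.Adj v w) (r₁ r₂ : V → V → Prop)
    (h₁ : r₁ ∈ Acyc Y) (h₂ : r₂ ∈ Acyc Y) (I : Set V)
    (hI₁ : I = {a | Relation.ReflTransGen r₁ v a ∧ Relation.ReflTransGen r₁ a w})
    (hI₂ : I = {a | Relation.ReflTransGen r₂ v a ∧ Relation.ReflTransGen r₂ a w})
    (hagree : ∀ a ∈ I, ∀ b ∈ I, r₁ a b ↔ r₂ a b)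
    (hk : KEquiv (contractSetG Y I v)
      (contractSetRel r₁ I v) (contractSetRel r₂ I v)) :
    KEquiv Y r₁ r₂ :=
  kappa_equiv_of_contraction_general Y v w r₁ r₂ h₁ h₂ I hI₁ hI₂ hagree hk

end AcycPaper
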